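/- Let A be an n×n Hermitian matrix with spectral decomposition A = U D U†, D = diag(λ_1,…,λ_n), and let A₊ = U D₊ U† where D₊ = diag(max{0,λ_i}). Then for any unitarily invariant norm |||·|||, A₊ minimizes |||A - X||| over all positive semidefinite X. -/

import Mathlib

/-!
Conjugating by the eigenvector unitary `U` of `A` reduces everything to `A = diagonal d`, with
`Y = U⋆ X U` still positive semidefinite, so its diagonal entries `r i` are nonnegative reals.
A unitarily invariant seminorm does not increase under pinching (`M` and `S M S` for a diagonal
sign matrix `S` average to `M` with one row and column cut off the diagonal), hence under
`M ↦ diagonal M.diag`, nor under left multiplication by a diagonal contraction (an average of two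
diagonal unitaries). Since `min (d i) 0 = a i * (d i - r i)` with `|a i| ≤ 1`, the matrix
`A - A₊ = diagonal (min d 0)` arises from `diagonal d - Y` by these two operations.
-/

open Matrix ComplexOrder

attribute [local instance] Classical.propDecidable

/-- Square root of a positive semidefinite matrix (junk value `0` otherwise). -/
noncomputable def psqrt {d : ℕ} (X : Matrix (Fin d) (Fin d) ℂ) : Matrix (Fin d) (Fin d) ℂ :=
  if h : X.PosSemidef then
    h.1.eigenvectorUnitary.1 * diagonal ((↑) ∘ (√·) ∘ h.1.eigenvalues) *
      (star h.1.eigenvectorUnitary.1)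
  else 0

/-- Schatten 1-norm (trace norm): `‖M‖₁ = Tr √(Mᴴ M)`. -/
noncomputable def traceNorm {d : ℕ} (M : Matrix (Fin d) (Fin d) ℂ) : ℝ :=
  (psqrt (Mᴴ * M)).trace.re

/-- Fidelity `F(X, σ) = Tr √(√σ X √σ)` of positive semidefinite matrices. -/
noncomputable def fid {d : ℕ} (X σ : Matrix (Fin d) (Fin d) ℂ) : ℝ :=
  (psqrt (psqrt σ * X * psqrt σ)).trace.re

theorem Seminorm.map_smul_two_inv_add_le {E : Type*} [AddCommGroup E] [Module ℂ E]
    (p : Seminorm ℂ E) {x y : E} {c : ℝ} (hx : p x ≤ c) (hy : p y ≤ c) :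
    p ((2 : ℂ)⁻¹ • (x + y)) ≤ c := by
  rw [map_smul_eq_mul, norm_inv, Complex.norm_ofNat]
  linarith [map_add_le_add p x y]

theorem Complex.exists_eq_add_div_two_of_norm_le_one {z : ℂ} (hz : ‖z‖ ≤ 1) :
    ∃ w₁ w₂ : ℂ, ‖w₁‖ = 1 ∧ ‖w₂‖ = 1 ∧ z = (w₁ + w₂) / 2 := by
  set t := √(1 - ‖z‖ ^ 2)
  have hnorm (s : ℝ) (hs : s ^ 2 = t ^ 2) : ‖(‖z‖ + s * I) * exp (arg z * I)‖ = 1 := by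
    have ht : t ^ 2 = 1 - ‖z‖ ^ 2 := Real.sq_sqrt (by nlinarith [norm_nonneg z])
    rw [norm_mul, norm_exp_ofReal_mul_I, mul_one, norm_add_mul_I, hs, ht]
    simp
  refine ⟨(‖z‖ + t * I) * exp (arg z * I), (‖z‖ + (-t : ℝ) * I) * exp (arg z * I),
    hnorm t rfl, hnorm (-t) (neg_sq t), ?_⟩
  conv_lhs => rw [← norm_mul_exp_arg_mul_I z]
  push_cast
  ring

theorem exists_abs_le_one_min_zero_eq_mul (x : ℝ) {r : ℝ} (hr : 0 ≤ r) :
    ∃ a : ℝ, |a| ≤ 1 ∧ min x 0 = a * (x - r) := by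
  rcases le_or_gt 0 x with hx | hx
  · exact ⟨0, by simp, by simp [hx]⟩
  · have hxr : x - r < 0 := by linarith
    refine ⟨x / (x - r), ?_, by rw [min_eq_left hx.le, div_mul_cancel₀ _ hxr.ne]⟩
    rw [abs_div, abs_of_neg hx, abs_of_neg hxr, div_le_one (by linarith)]
    linarith

namespace Matrix

variable {m : Type*} [Fintype m] [DecidableEq m]

theorem IsHermitian.sub_cfc {𝕜 : Type*} [RCLike 𝕜]
    {A : Matrix m m 𝕜} (hA : A.IsHermitian) (f : ℝ → ℝ) :
    A - hA.cfc f = Unitary.conjStarAlgAut 𝕜 _ hA.eigenvectorUnitary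
      (diagonal fun i ↦ ((hA.eigenvalues i - f (hA.eigenvalues i) : ℝ) : 𝕜)) := by
  calc A - hA.cfc f
      = Unitary.conjStarAlgAut 𝕜 _ hA.eigenvectorUnitary
          (diagonal (RCLike.ofReal ∘ hA.eigenvalues)) - hA.cfc f :=
        congrArg (· - _) hA.spectral_theorem
    _ = _ := by
      rw [IsHermitian.cfc, ← map_sub, diagonal_sub]
      simp only [Function.comp_apply, RCLike.ofReal_sub]

theorem diagonal_mem_unitaryGroup {𝕜 : Type*} [RCLike 𝕜] {w : m → 𝕜}
    (hw : ∀ i, ‖w i‖ = 1) :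
    diagonal w ∈ unitaryGroup m 𝕜 := by
  rw [mem_unitaryGroup_iff', star_eq_conjTranspose, diagonal_conjTranspose,
    diagonal_mul_diagonal, ← diagonal_one]
  congr 1
  ext i
  simp [RCLike.conj_mul, hw i]

def IsUnitarilyInvariant (p : Seminorm ℂ (Matrix m m ℂ)) : Prop :=
  ∀ X {U V}, U ∈ unitaryGroup m ℂ → V ∈ unitaryGroup m ℂ → p (U * X * V) = p X

namespace IsUnitarilyInvariant

variable {p : Seminorm ℂ (Matrix m m ℂ)}

theorem map_conjStarAlgAut (hp : IsUnitarilyInvariant p) (U : unitaryGroup m ℂ)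
    (X : Matrix m m ℂ) : p (Unitary.conjStarAlgAut ℂ _ U X) = p X :=
  hp X U.2 (Unitary.star_mem U.2)

theorem map_diagonal_mul_le (hp : IsUnitarilyInvariant p) {a : m → ℂ}
    (ha : ∀ i, ‖a i‖ ≤ 1) (M : Matrix m m ℂ) : p (diagonal a * M) ≤ p M := by
  choose w₁ w₂ hw₁ hw₂ ha_eq using
    fun i ↦ Complex.exists_eq_add_div_two_of_norm_le_one (ha i)
  have hmid :
      diagonal a * M = (2 : ℂ)⁻¹ • (diagonal w₁ * M * 1 + diagonal w₂ * M * 1) := by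
    ext i j
    simp [diagonal_mul, ha_eq i]
    ring
  rw [hmid]
  exact p.map_smul_two_inv_add_le
    (hp M (diagonal_mem_unitaryGroup hw₁) (one_mem _)).le
    (hp M (diagonal_mem_unitaryGroup hw₂) (one_mem _)).le

theorem map_pinching_le (hp : IsUnitarilyInvariant p) (k : m) (M : Matrix m m ℂ) :
    p (of fun i j ↦ if (i = k ↔ j = k) then M i j else 0) ≤ p M := by
  set s : m → ℂ := fun i ↦ if i = k then -1 else 1
  have hs : diagonal s ∈ unitaryGroup m ℂ := diagonal_mem_unitaryGroup fun i ↦ by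
    by_cases h : i = k <;> simp [s, h]
  have hmid : (of fun i j ↦ if (i = k ↔ j = k) then M i j else 0) =
      (2 : ℂ)⁻¹ • (M + diagonal s * M * diagonal s) := by
    ext i j
    by_cases hi : i = k <;> by_cases hj : j = k <;> simp [s, hi, hj] <;> ring
  rw [hmid]
  exact p.map_smul_two_inv_add_le le_rfl (hp M hs hs).le

theorem map_diagonal_diag_le (hp : IsUnitarilyInvariant p) (M : Matrix m m ℂ) :
    p (diagonal M.diag) ≤ p M := by
  have hcut (s : Finset m) :
      p (of fun i j ↦ if i = j ∨ (i ∉ s ∧ j ∉ s) then M i j else 0) ≤ p M := by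
    induction s using Finset.induction with
    | empty =>
      simp only [Finset.notMem_empty, not_false_eq_true, and_self, or_true, if_true]
      rfl
    | insert k s _ ih =>
      refine le_trans (le_of_eq (congrArg p ?_)) ((hp.map_pinching_le k _).trans ih)
      ext i j
      simp only [of_apply, Finset.mem_insert]
      split_ifs <;> grind
  convert hcut Finset.univ using 2
  ext i j
  by_cases hij : i = j <;> simp [hij]

theorem map_diagonal_min_zero_le (hp : IsUnitarilyInvariant p) (d : m → ℝ)
    {Y : Matrix m m ℂ} (hY : Y.PosSemidef) :
    p (diagonal fun i ↦ ((min (d i) 0 : ℝ) : ℂ)) ≤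
      p (diagonal (fun i ↦ (d i : ℂ)) - Y) := by
  choose r hr hYr using fun i ↦ RCLike.nonneg_iff_exists_ofReal.mp (hY.diag_nonneg (i := i))
  choose a ha hmin using fun i ↦ exists_abs_le_one_min_zero_eq_mul (d i) (hr i)
  have hfactor : (diagonal fun i ↦ ((min (d i) 0 : ℝ) : ℂ)) =
      diagonal (fun i ↦ (a i : ℂ)) * diagonal (diagonal (fun i ↦ (d i : ℂ)) - Y).diag := by
    rw [diagonal_mul_diagonal]
    congr 1
    ext i
    simp [hmin, ← hYr]
  calc p (diagonal fun i ↦ ((min (d i) 0 : ℝ) : ℂ))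
      ≤ p (diagonal (diagonal (fun i ↦ (d i : ℂ)) - Y).diag) :=
        hfactor ▸ hp.map_diagonal_mul_le (by simpa using ha) _
    _ ≤ p (diagonal (fun i ↦ (d i : ℂ)) - Y) := hp.map_diagonal_diag_le _

end IsUnitarilyInvariant

end Matrix

theorem positive_part_closest_psd_general {n : ℕ} (A : Matrix (Fin n) (Fin n) ℂ)
    (hA : A.IsHermitian)
    (N : Matrix (Fin n) (Fin n) ℂ → ℝ)
    (hN_add : ∀ X Y, N (X + Y) ≤ N X + N Y)
    (hN_smul : ∀ (c : ℂ) (X), N (c • X) = ‖c‖ * N X)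
    (hN_unitary : ∀ (X U V : Matrix (Fin n) (Fin n) ℂ),
      U ∈ Matrix.unitaryGroup (Fin n) ℂ → V ∈ Matrix.unitaryGroup (Fin n) ℂ →
      N (U * X * V) = N X)
    (X : Matrix (Fin n) (Fin n) ℂ) (hX : X.PosSemidef) :
    N (A - hA.cfc (fun x => max 0 x)) ≤ N (A - X) := by
  let p : Seminorm ℂ (Matrix (Fin n) (Fin n) ℂ) := Seminorm.of N hN_add hN_smul
  have hp : IsUnitarilyInvariant p := fun X _ _ ↦ hN_unitary X _ _
  set U := hA.eigenvectorUnitary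
  set φ := Unitary.conjStarAlgAut ℂ (Matrix (Fin n) (Fin n) ℂ) U
  obtain ⟨d, hd⟩ : ∃ d, hA.eigenvalues = d := ⟨_, rfl⟩
  have hA_eq : A = φ (diagonal fun i ↦ (d i : ℂ)) := hd ▸ hA.spectral_theorem
  have hA_sub_pos :
      A - hA.cfc (fun x => max 0 x) = φ (diagonal fun i ↦ ((min (d i) 0 : ℝ) : ℂ)) := by
    rw [hA.sub_cfc, hd]
    congr 2 with i
    rcases le_total (d i) 0 with h | h <;> simp [h]
  have hA_sub : A - X = φ (diagonal (fun i ↦ (d i : ℂ)) - φ.symm X) := by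
    rw [map_sub, φ.apply_symm_apply, ← hA_eq]
  calc N (A - hA.cfc (fun x => max 0 x))
      = p (diagonal fun i ↦ ((min (d i) 0 : ℝ) : ℂ)) := by
        rw [hA_sub_pos]
        exact hp.map_conjStarAlgAut U _
    _ ≤ p (diagonal (fun i ↦ (d i : ℂ)) - φ.symm X) :=
        hp.map_diagonal_min_zero_le d (hX.conjTranspose_mul_mul_same _)
    _ = N (A - X) := by
        rw [hA_sub]
        exact (hp.map_conjStarAlgAut U _).symm

theorem positive_part_closest_psd {n : ℕ} (A : Matrix (Fin n) (Fin n) ℂ)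
    (hA : A.IsHermitian)
    (N : Matrix (Fin n) (Fin n) ℂ → ℝ)
    (hN_nonneg : ∀ X, 0 ≤ N X)
    (hN_add : ∀ X Y, N (X + Y) ≤ N X + N Y)
    (hN_smul : ∀ (c : ℂ) (X), N (c • X) = ‖c‖ * N X)
    (hN_unitary : ∀ (X U V : Matrix (Fin n) (Fin n) ℂ),
      U ∈ Matrix.unitaryGroup (Fin n) ℂ → V ∈ Matrix.unitaryGroup (Fin n) ℂ →
      N (U * X * V) = N X)
    (X : Matrix (Fin n) (Fin n) ℂ) (hX : X.PosSemidef) :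
    N (A - hA.cfc (fun x => max 0 x)) ≤ N (A - X) :=
  positive_part_closest_psd_general A hA N hN_add hN_smul hN_unitary X hX
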